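/- Let F ∈ B_c, t > 0 and u(x,t) = ∫_ℝ F(x−ξ) Θ_t'(ξ) dξ. Then u(x,t) → 0 as |x| → ∞, and the improper integral of u(·,t) over ℝ recovers the integral of the initial data: lim_{α→−∞, β→+∞} ∫_α^β u(ξ,t) dξ = F(∞). -/

import Mathlib

open MeasureTheory Filter Topology

/-- The Gauss–Weierstrass heat kernel `Θ_t(x) = (4πt)^(−1/2) exp(−x²/(4t))` for `t > 0`. -/
noncomputable def heatK (t x : ℝ) : ℝ :=
  (Real.sqrt (4 * Real.pi * t))⁻¹ * Real.exp (-x ^ 2 / (4 * t))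

/-- Spatial derivative of the heat kernel: `Θ_t'(ξ) = −ξ Θ_t(ξ)/(2t)`. -/
noncomputable def heatK' (t x : ℝ) : ℝ := -x * heatK t x / (2 * t)

/-- `F ∈ B_c`: continuous, vanishing at `−∞`, with a finite limit at `+∞`. -/
def memBc (F : ℝ → ℝ) : Prop :=
  Continuous F ∧ Tendsto F atBot (nhds (0 : ℝ)) ∧ ∃ L : ℝ, Tendsto F atTop (nhds L)

/-- Heat convolution `u(x,t) = ∫ F(x−ξ) Θ_t'(ξ) dξ` of the distribution `f = F'`. -/
noncomputable def heatConv (F : ℝ → ℝ) (t x : ℝ) : ℝ := ∫ ξ : ℝ, F (x - ξ) * heatK' t ξ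

/-!
Put `v(x) = ∫ F(x − ξ) Θ_t(ξ) dξ`. Since `F` is bounded, dominated convergence lets the limits of
`F` at `±∞` pass through both convolutions: `Θ_t` has integral `1` and `Θ_t'` has integral `0`, so
`v(−∞) = 0`, `v(+∞) = F(∞)` and `u(±∞) = 0`. Reflecting to `u(x) = ∫ F(η) Θ_t'(x − η) dη` and
applying Fubini and the fundamental theorem of calculus in `x` gives `∫_α^β u = v(β) − v(α)`.
-/

theorem exists_norm_le_of_tendsto_atBot_atTop {E : Type*} [SeminormedAddCommGroup E]
    {f : ℝ → E} (hf : Continuous f) {a b : E} (hbot : Tendsto f atBot (𝓝 a))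
    (htop : Tendsto f atTop (𝓝 b)) : ∃ M, ∀ x, ‖f x‖ ≤ M := by
  have hbdd : Bornology.IsBounded (Set.range f) :=
    hf.isBounded_range_iff_isBigO_atTop_atBot.mpr ⟨htop.isBigO_one ℝ, hbot.isBigO_one ℝ⟩
  obtain ⟨M, hM⟩ := isBounded_iff_forall_norm_le.mp hbdd
  exact ⟨M, fun x => hM _ (Set.mem_range_self x)⟩

section Convolution

variable {F g g' : ℝ → ℝ} {M : ℝ}

theorem integral_comp_sub_mul_eq (F g : ℝ → ℝ) (x : ℝ) :
    ∫ ξ, F (x - ξ) * g ξ = ∫ η, F η * g (x - η) := by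
  rw [← integral_sub_left_eq_self (fun η => F η * g (x - η)) volume x]
  simp

theorem tendsto_integral_comp_sub_mul {l : Filter ℝ} [l.IsCountablyGenerated] {c : ℝ}
    (hF : Continuous F) (hFM : ∀ x, ‖F x‖ ≤ M) (hg : Integrable g)
    (hl : ∀ ξ, Tendsto (fun x => x - ξ) l l) (hFl : Tendsto F l (𝓝 c)) :
    Tendsto (fun x => ∫ ξ, F (x - ξ) * g ξ) l (𝓝 (c * ∫ ξ, g ξ)) := by
  rw [← integral_const_mul]
  refine tendsto_integral_filter_of_dominated_convergence (fun ξ => M * ‖g ξ‖)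
    (Eventually.of_forall fun x =>
      (hF.comp (continuous_const.sub continuous_id)).aestronglyMeasurable.mul
        hg.aestronglyMeasurable)
    (Eventually.of_forall fun x => Eventually.of_forall fun ξ => ?_)
    (hg.norm.const_mul M) (Eventually.of_forall fun ξ => ((hFl.comp (hl ξ)).mul_const _))
  rw [norm_mul]
  exact mul_le_mul_of_nonneg_right (hFM _) (norm_nonneg _)

theorem integrable_prod_mul_comp_sub (μ : Measure ℝ) [IsFiniteMeasure μ] (hF : Continuous F)
    (hFM : ∀ x, ‖F x‖ ≤ M) (hg : Integrable g) (hgc : Continuous g) :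
    Integrable (fun p : ℝ × ℝ => F p.2 * g (p.1 - p.2)) (μ.prod volume) := by
  have hmeas : AEStronglyMeasurable (fun p : ℝ × ℝ => F p.2 * g (p.1 - p.2))
      (μ.prod volume) := by
    fun_prop
  have hfiber : ∀ x, Integrable (fun η => F η * g (x - η)) := fun x =>
    (hg.comp_sub_left x).bdd_mul hF.aestronglyMeasurable (Eventually.of_forall hFM)
  refine (integrable_prod_iff hmeas).mpr ⟨Eventually.of_forall hfiber, ?_⟩
  refine Integrable.mono' (integrable_const (M * ∫ ξ, ‖g ξ‖))
    hmeas.norm.integral_prod_right' (Eventually.of_forall fun x => ?_)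
  rw [Real.norm_of_nonneg (integral_nonneg fun η => norm_nonneg _),
    ← integral_sub_left_eq_self (fun ξ => ‖g ξ‖) volume x, ← integral_const_mul]
  refine integral_mono (hfiber x).norm ((hg.comp_sub_left x).norm.const_mul M) fun η => ?_
  rw [norm_mul]
  exact mul_le_mul_of_nonneg_right (hFM _) (norm_nonneg _)

theorem intervalIntegral_integral_comp_sub_mul (hF : Continuous F) (hFM : ∀ x, ‖F x‖ ≤ M)
    (hg : Integrable g) (hg' : Integrable g') (hg'c : Continuous g')
    (hderiv : ∀ x, HasDerivAt g (g' x) x) (a b : ℝ) :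
    ∫ x in a..b, ∫ ξ, F (x - ξ) * g' ξ = (∫ ξ, F (b - ξ) * g ξ) - ∫ ξ, F (a - ξ) * g ξ := by
  have hftc : ∀ η, ∫ x in a..b, g' (x - η) = g (b - η) - g (a - η) := fun η =>
    intervalIntegral.integral_eq_sub_of_hasDerivAt
      (fun x _ => by simpa using (hderiv (x - η)).comp_sub_const x η)
      (hg'.comp_sub_right η).intervalIntegrable
  have hfiber : ∀ x, Integrable (fun η => F η * g (x - η)) := fun x =>
    (hg.comp_sub_left x).bdd_mul hF.aestronglyMeasurable (Eventually.of_forall hFM)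
  have : IsFiniteMeasure (volume.restrict (Set.uIoc a b)) := by
    rw [Set.uIoc]
    infer_instance
  calc ∫ x in a..b, ∫ ξ, F (x - ξ) * g' ξ
      = ∫ x in a..b, ∫ η, F η * g' (x - η) := by simp only [integral_comp_sub_mul_eq]
    _ = ∫ η, ∫ x in a..b, F η * g' (x - η) :=
        intervalIntegral_integral_swap (integrable_prod_mul_comp_sub _ hF hFM hg' hg'c)
    _ = ∫ η, (F η * g (b - η) - F η * g (a - η)) := by
        simp only [intervalIntegral.integral_const_mul, hftc, mul_sub]
    _ = (∫ ξ, F (b - ξ) * g ξ) - ∫ ξ, F (a - ξ) * g ξ := by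
        rw [integral_sub (hfiber b) (hfiber a), integral_comp_sub_mul_eq,
          integral_comp_sub_mul_eq]

end Convolution

section HeatKernel

variable {t : ℝ}

theorem heatK_eq_mul_exp (t x : ℝ) :
    heatK t x = (Real.sqrt (4 * Real.pi * t))⁻¹ * Real.exp (-(4 * t)⁻¹ * x ^ 2) := by
  unfold heatK
  congr 2
  ring

theorem heatK'_eq_mul_exp (t x : ℝ) :
    heatK' t x
      = -(2 * t)⁻¹ * (Real.sqrt (4 * Real.pi * t))⁻¹ * (x * Real.exp (-(4 * t)⁻¹ * x ^ 2)) := by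
  rw [heatK', heatK_eq_mul_exp]
  ring

theorem continuous_heatK (t : ℝ) : Continuous (heatK t) := by
  unfold heatK
  fun_prop

theorem continuous_heatK' (t : ℝ) : Continuous (heatK' t) := by
  unfold heatK'
  exact (continuous_neg.mul (continuous_heatK t)).div_const _

theorem integrable_heatK (ht : 0 < t) : Integrable (heatK t) := by
  simpa only [← heatK_eq_mul_exp] using
    (integrable_exp_neg_mul_sq (by positivity : (0 : ℝ) < (4 * t)⁻¹)).const_mul
      (Real.sqrt (4 * Real.pi * t))⁻¹

theorem integrable_heatK' (ht : 0 < t) : Integrable (heatK' t) := by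
  simpa only [← heatK'_eq_mul_exp] using
    (integrable_mul_exp_neg_mul_sq (by positivity : (0 : ℝ) < (4 * t)⁻¹)).const_mul
      (-(2 * t)⁻¹ * (Real.sqrt (4 * Real.pi * t))⁻¹)

theorem integral_heatK (ht : 0 < t) : ∫ x, heatK t x = 1 := by
  simp only [heatK_eq_mul_exp, integral_const_mul, integral_gaussian]
  rw [show Real.pi / (4 * t)⁻¹ = 4 * Real.pi * t by field_simp]
  exact inv_mul_cancel₀ (Real.sqrt_pos.mpr (by positivity)).ne'

theorem hasDerivAt_heatK (ht : t ≠ 0) (x : ℝ) : HasDerivAt (heatK t) (heatK' t x) x := by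
  have hexp : HasDerivAt (fun y : ℝ => -y ^ 2 / (4 * t)) (-(2 * x) / (4 * t)) x := by
    simpa using (hasDerivAt_pow 2 x).neg.div_const (4 * t)
  refine (hexp.exp.const_mul (Real.sqrt (4 * Real.pi * t))⁻¹).congr_deriv ?_
  rw [heatK', heatK]
  field_simp
  ring

theorem integral_heatK' (ht : 0 < t) : ∫ x, heatK' t x = 0 :=
  integral_eq_zero_of_hasDerivAt_of_integrable (hasDerivAt_heatK ht.ne') (integrable_heatK' ht)
    (integrable_heatK ht)

end HeatKernel

/-- `u(x,t) → 0` as `|x| → ∞`, and the improper integral of `u(·,t)` over `ℝ`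
recovers the integral of the initial data: `lim_{α→−∞,β→+∞} ∫_α^β u = F(∞)`. -/
theorem stmt2 (F : ℝ → ℝ) (hF : memBc F) (t : ℝ) (ht : 0 < t) :
    Tendsto (fun x : ℝ => heatConv F t x) atTop (nhds 0) ∧
    Tendsto (fun x : ℝ => heatConv F t x) atBot (nhds 0) ∧
    (∀ L : ℝ, Tendsto F atTop (nhds L) →
      Tendsto (fun p : ℝ × ℝ => ∫ ξ in p.1..p.2, heatConv F t ξ)
        (atBot ×ˢ atTop) (nhds L)) := by
  obtain ⟨hFc, hbot, L₀, htop⟩ := hF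
  obtain ⟨M, hM⟩ := exists_norm_le_of_tendsto_atBot_atTop hFc hbot htop
  have hshift_top (ξ : ℝ) : Tendsto (fun x => x - ξ) atTop atTop :=
    tendsto_atTop_add_const_right atTop (-ξ) tendsto_id
  have hshift_bot (ξ : ℝ) : Tendsto (fun x => x - ξ) atBot atBot :=
    tendsto_atBot_add_const_right atBot (-ξ) tendsto_id
  have hu {l : Filter ℝ} [l.IsCountablyGenerated] {c : ℝ} (hl : ∀ ξ, Tendsto (fun x => x - ξ) l l)
      (hFl : Tendsto F l (𝓝 c)) : Tendsto (heatConv F t) l (𝓝 0) := by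
    have h := tendsto_integral_comp_sub_mul hFc hM (integrable_heatK' ht) hl hFl
    rwa [integral_heatK' ht, mul_zero] at h
  refine ⟨hu hshift_top htop, hu hshift_bot hbot, fun L hL => ?_⟩
  set v : ℝ → ℝ := fun x => ∫ ξ, F (x - ξ) * heatK t ξ
  have hv_top : Tendsto v atTop (𝓝 L) := by
    simpa [integral_heatK ht] using
      tendsto_integral_comp_sub_mul hFc hM (integrable_heatK ht) hshift_top hL
  have hv_bot : Tendsto v atBot (𝓝 0) := by
    simpa [integral_heatK ht] using
      tendsto_integral_comp_sub_mul hFc hM (integrable_heatK ht) hshift_bot hbot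
  have hint (p : ℝ × ℝ) : ∫ ξ in p.1..p.2, heatConv F t ξ = v p.2 - v p.1 :=
    intervalIntegral_integral_comp_sub_mul hFc hM (integrable_heatK ht) (integrable_heatK' ht)
      (continuous_heatK' t) (hasDerivAt_heatK ht.ne') p.1 p.2
  simp only [hint]
  simpa using (hv_top.comp tendsto_snd).sub (hv_bot.comp tendsto_fst)
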